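/- arXiv:1302.4419 — 3 statements merged into one kernel-verified Lean document; each statement's English description precedes it below -/
import Mathlib

section
/- For symmetric f₁, f₄ ∈ H^{⊗n} and f₂, f₃ ∈ H^{⊗m}, the symmetrized tensor products satisfy ⟨f₁ ⊗̃ f₂, f₃ ⊗̃ f₄⟩ = (m! n!/(m+n)!) ∑_{r=0}^{m∧n} C(n,r) C(m,r) ⟨f₁ ⊗_r f₃, f₄ ⊗_r f₂⟩. -/
/-- The inner product of two (coefficient) kernels: `⟨F,G⟩ = ∑' x, F x * G x`. -/
noncomputable def ip {α : Type*} (F G : α → ℝ) : ℝ := ∑' x, F x * G x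

/-- The squared norm `‖F‖² = ⟨F,F⟩` of a kernel. -/
noncomputable def nsq {α : Type*} (F : α → ℝ) : ℝ := ip F F

/-- A kernel of order `n` (an element of `H^{⊗n}` written in coordinates with respect to a
Hilbert basis of `H`) is symmetric if its coefficients are invariant under permutations. -/
def IsSym {n : ℕ} (f : (Fin n → ℕ) → ℝ) : Prop :=
  ∀ σ : Equiv.Perm (Fin n), ∀ j : Fin n → ℕ, f (j ∘ σ) = f j

/-- The contraction of order `r` of a kernel `f` of order `n` with a kernel `g` of order `m`;
the result is a kernel of order `c = n + m - 2r`: `r` indices of `f` and `g` are paired and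
summed out, the remaining `n - r` indices of `f` and `m - r` indices of `g` stay free. -/
noncomputable def contr {n m r c : ℕ} (hrn : r ≤ n) (hrm : r ≤ m) (hc : n + m = 2 * r + c)
    (f : (Fin n → ℕ) → ℝ) (g : (Fin m → ℕ) → ℝ) : (Fin c → ℕ) → ℝ :=
  fun t => ∑' u : Fin r → ℕ,
    (f fun i => if hi : (i : ℕ) < r then u ⟨i, hi⟩
        else t ⟨(i : ℕ) - r, by have := i.isLt; omega⟩) *
    (g fun i => if hi : (i : ℕ) < r then u ⟨i, hi⟩
        else t ⟨n - r + ((i : ℕ) - r), by have := i.isLt; omega⟩)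

/-- Symmetrization of a kernel of order `c`. -/
noncomputable def symmize {c : ℕ} (F : (Fin c → ℕ) → ℝ) : (Fin c → ℕ) → ℝ :=
  fun t => (1 / (Nat.factorial c : ℝ)) * ∑ σ : Equiv.Perm (Fin c), F (t ∘ σ)

/-- `sder f i` is the kernel `s_{i,f} = n ∑_{j₂,…,jₙ} λ_{i,j₂,…,jₙ} e_{j₂}⊗…⊗e_{jₙ}`,
the coefficient kernel of `⟨D Iₙ(f), e_i⟩`. -/
noncomputable def sder {n : ℕ} (f : (Fin n → ℕ) → ℝ) (i : ℕ) : (Fin (n - 1) → ℕ) → ℝ :=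
  fun j => (n : ℝ) * f fun k => if hk : (k : ℕ) = 0 then i
    else j ⟨(k : ℕ) - 1, by have := k.isLt; omega⟩

open Equiv Finset
open scoped Nat

/-!
Expanding both symmetrizations, and using that `⟨F ∘ σ, G ∘ τ⟩` only depends on `σ⁻¹ τ`, the
left-hand side is the average over `π ∈ S_{n+m}` of `⟨f₁ ⊗ f₂, (f₃ ⊗ f₄) ∘ π⟩`. Let `r` be the
number of coordinates read both by `f₁` and by `f₃` in this term. The four kernels then read
four blocks of coordinates of sizes `r` (shared by `f₁, f₃`), `n - r` (by `f₁, f₄`), `m - r`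
(by `f₃, f₂`) and `r` (by `f₄, f₂`). Since the kernels are symmetric only these blocks matter, so
relabelling the coordinates turns the `π`-term into `⟨f₁ ⊗_r f₃, f₄ ⊗_r f₂⟩`. Finally, exactly
`m! n! C(n,r) C(m,r)` permutations produce a given `r`: the image `W` of the `f₃`-block must meet
the `f₁`-block in `r` points, which leaves `C(n,r) C(m,m-r)` choices of `W`, and then `m! n!`
choices of bijections onto `W` and its complement.
-/

theorem card_perm_comp_eq {α ι : Type*} [Fintype α] [DecidableEq α] [Fintype ι] [DecidableEq ι]
    {f g : α → ι} (h : ∀ i, Fintype.card {a // f a = i} = Fintype.card {a // g a = i}) :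
    Fintype.card {σ : Perm α // g ∘ σ = f} = ∏ i, (Fintype.card {a // f a = i})! := by
  let σ₀ : Perm α := ofFiberEquiv fun i => Fintype.equivOfCardEq (h i)
  have hσ₀ : g ∘ σ₀ = f := funext (ofFiberEquiv_map _)
  rw [← DomMulAct.stabilizer_card f]
  refine Fintype.card_congr (subtypeEquiv (Equiv.mulLeft σ₀⁻¹) fun σ => ?_)
  have hcomp : f ∘ ⇑(σ₀⁻¹ * σ) = g ∘ σ := by
    rw [← hσ₀]
    ext
    simp
  rw [coe_mulLeft, hcomp]

theorem card_perm_forall_mem_iff {α : Type*} [Fintype α] [DecidableEq α] {s t : Finset α}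
    (h : #s = #t) : #{σ : Perm α | ∀ x, σ x ∈ t ↔ x ∈ s} = (#s)! * (#sᶜ)! := by
  have hcard : ∀ (u : Finset α) (b : Bool), Fintype.card {a // decide (a ∈ u) = b}
      = if b then #u else #uᶜ := by
    intro u b
    cases b <;> simp [Fintype.card_subtype, filter_not, ← compl_eq_univ_sdiff]
  have key := card_perm_comp_eq (f := fun x => decide (x ∈ s)) (g := fun x => decide (x ∈ t))
    fun b => by simp only [hcard, card_compl, h]
  simp only [hcard, Fintype.prod_bool, if_true, Bool.false_eq_true, if_false] at key
  rw [← key, ← Fintype.card_subtype]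
  congr! 2 with σ
  simp [funext_iff]

theorem card_powersetCard_filter_card_filter {α : Type*} [Fintype α] [DecidableEq α]
    (p : α → Prop) [DecidablePred p] {k r : ℕ} (hr : r ≤ k) :
    #{W ∈ powersetCard k univ | #{x ∈ W | p x} = r}
      = (#{x | p x}).choose r * (#{x | ¬p x}).choose (k - r) := by
  have hsplit : ∀ S T : Finset α, S ⊆ ({x | p x} : Finset α) → T ⊆ ({x | ¬p x} : Finset α) →
      {x ∈ S ∪ T | p x} = S ∧ {x ∈ S ∪ T | ¬p x} = T := by
    intro S T hS hT
    simp only [subset_iff, mem_filter, mem_univ, true_and] at hS hT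
    constructor <;> ext x <;> simp only [mem_filter, mem_union] <;> grind
  rw [← card_powersetCard, ← card_powersetCard, ← card_product]
  refine card_nbij' (fun W => ({x ∈ W | p x}, {x ∈ W | ¬p x})) (fun ST => ST.1 ∪ ST.2)
    ?_ ?_ ?_ ?_
  · intro W hW
    simp only [coe_filter, mem_powersetCard, subset_univ, true_and, Set.mem_ofPred_eq] at hW
    simp only [mem_coe, mem_product, mem_powersetCard]
    have : #{x ∈ W | p x} + #{x ∈ W | ¬p x} = #W := card_filter_add_card_filter_not p
    exact ⟨⟨filter_subset_filter _ (subset_univ _), hW.2⟩,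
      filter_subset_filter _ (subset_univ _), by omega⟩
  · rintro ⟨S, T⟩ hST
    simp only [mem_coe, mem_product, mem_powersetCard] at hST
    obtain ⟨⟨hS, hSr⟩, hT, hTr⟩ := hST
    obtain ⟨hpS, hpT⟩ := hsplit S T hS hT
    have : #{x ∈ S ∪ T | p x} + #{x ∈ S ∪ T | ¬p x} = #(S ∪ T) :=
      card_filter_add_card_filter_not p
    simp only [coe_filter, mem_powersetCard, subset_univ, true_and, Set.mem_ofPred_eq]
    rw [hpS, hpT] at this
    exact ⟨by omega, by rw [hpS, hSr]⟩
  · intro W _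
    exact filter_union_filter_not_eq _ _
  · rintro ⟨S, T⟩ hST
    simp only [mem_coe, mem_product, mem_powersetCard] at hST
    obtain ⟨hpS, hpT⟩ := hsplit S T hST.1.1 hST.2.1
    exact Prod.ext hpS hpT

theorem card_filter_sum {α β : Type*} [Fintype α] [Fintype β] (P : α ⊕ β → Prop)
    [DecidablePred P] : #{y | P y} = #{a | P (Sum.inl a)} + #{b | P (Sum.inr b)} := by
  rw [← Fintype.card_subtype, Fintype.card_congr subtypeSum, Fintype.card_sum,
    Fintype.card_subtype, Fintype.card_subtype]

theorem card_filter_and_relations {γ : Type*} [Fintype γ] (p q : γ → Prop) [DecidablePred p]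
    [DecidablePred q] :
    #{a | p a ∧ q a} + #{a | p a ∧ ¬q a} = #{a | p a} ∧
    #{a | p a ∧ q a} + #{a | ¬p a ∧ q a} = #{a | q a} ∧
    #{a | p a} + #{a | ¬p a ∧ q a} + #{a | ¬p a ∧ ¬q a} = Fintype.card γ := by
  have split : ∀ (s : γ → Prop) [DecidablePred s] (t : γ → Prop) [DecidablePred t],
      #{a | s a ∧ t a} + #{a | s a ∧ ¬t a} = #{a | s a} := fun s _ t _ => by
    rw [← filter_filter, ← filter_filter]
    exact card_filter_add_card_filter_not t
  have hqp : #{a | p a ∧ q a} + #{a | ¬p a ∧ q a} = #{a | q a} := by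
    rw [← split q p]
    simp only [and_comm]
  have hp : #{a | p a} + #{a | ¬p a} = Fintype.card γ :=
    card_filter_add_card_filter_not p
  have := split p q
  have := split (¬p ·) q
  omega

theorem exists_equiv_forall_iff_and_iff {α β : Type*} [Fintype α] [Fintype β]
    {p q : α → Prop} {p' q' : β → Prop} [DecidablePred p] [DecidablePred q]
    [DecidablePred p'] [DecidablePred q'] (hcard : Fintype.card α = Fintype.card β)
    (hp : #{a | p a} = #{b | p' b}) (hq : #{a | q a} = #{b | q' b})
    (hpq : #{a | p a ∧ q a} = #{b | p' b ∧ q' b}) :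
    ∃ e : α ≃ β, ∀ a, (p' (e a) ↔ p a) ∧ (q' (e a) ↔ q a) := by
  have hfiber : ∀ l : Bool × Bool, Fintype.card {a // (decide (p a), decide (q a)) = l}
      = Fintype.card {b // (decide (p' b), decide (q' b)) = l} := by
    obtain ⟨h₁, h₂, h₃⟩ := card_filter_and_relations p q
    obtain ⟨h₁', h₂', h₃'⟩ := card_filter_and_relations p' q'
    rintro ⟨_ | _, _ | _⟩ <;> simp only [Fintype.card_subtype, Prod.mk.injEq,
      decide_eq_true_iff, decide_eq_false_iff_not] <;> omega
  refine ⟨ofFiberEquiv fun l => Fintype.equivOfCardEq (hfiber l), fun a => ?_⟩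
  have := ofFiberEquiv_map (fun l => Fintype.equivOfCardEq (hfiber l)) a
  simp only [Prod.mk.injEq, decide_eq_decide] at this
  exact this

theorem mem_range_equiv_comp {κ X Y : Type*} (e : X ≃ Y) (j : κ → X) (y : Y) :
    y ∈ Set.range (e ∘ j) ↔ e.symm y ∈ Set.range j := by
  rw [Set.range_comp, Set.mem_image_equiv]

theorem mem_range_fin_mk_add_iff {a b N : ℕ} (h : a + b = N) (x : Fin N) :
    x ∈ Set.range (fun j : Fin b => (⟨a + j, by omega⟩ : Fin N)) ↔ ¬(x : ℕ) < a := by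
  constructor
  · rintro ⟨j, rfl⟩
    simp
  · intro hx
    exact ⟨⟨x - a, by omega⟩, Fin.ext (by simp; omega)⟩

theorem fin_mk_add_injective {a b N : ℕ} (h : a + b = N) :
    Function.Injective (fun j : Fin b => (⟨a + j, by omega⟩ : Fin N)) :=
  fun _ _ hj => Fin.ext (by simpa using hj)

theorem summable_mul_of_summable_mul_self {ι : Type*} {F G : ι → ℝ}
    (hF : Summable fun x => F x * F x) (hG : Summable fun x => G x * G x) :
    Summable fun x => F x * G x :=
  Summable.of_norm_bounded (hF.add hG) fun x => by
    rw [Real.norm_eq_abs, abs_mul]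
    nlinarith [sq_nonneg (|F x| - |G x|), sq_abs (F x), sq_abs (G x)]

theorem tsum_tsum_mul_tsum_eq_tsum_prod {S U V : Type*} (F : S → U → ℝ) (G : S → V → ℝ)
    (h : Summable fun p : S × U × V => F p.1 p.2.1 * G p.1 p.2.2) :
    ∑' s, (∑' u, F s u) * ∑' v, G s v = ∑' p : S × U × V, F p.1 p.2.1 * G p.1 p.2.2 := by
  rw [h.tsum_prod' h.prod_factor]
  refine tsum_congr fun s => ?_
  rw [(h.prod_factor s).tsum_prod' (h.prod_factor s).prod_factor, ← tsum_mul_right]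
  exact tsum_congr fun u => (tsum_mul_left (f := G s) (a := F s u)).symm

theorem summable_comp_perm {N : ℕ} {F : (Fin N → ℕ) → ℝ} (hF : Summable F)
    (σ : Perm (Fin N)) : Summable fun t => F (t ∘ σ) :=
  (σ.symm.arrowCongr (Equiv.refl ℕ)).summable_iff.mpr hF

theorem tsum_comp_perm {N : ℕ} (F : (Fin N → ℕ) → ℝ) (σ : Perm (Fin N)) :
    ∑' t, F (t ∘ σ) = ∑' t, F t :=
  (σ.symm.arrowCongr (Equiv.refl ℕ)).tsum_eq F

theorem IsSym.apply_comp_eq_of_range_eq {k : ℕ} {f : (Fin k → ℕ) → ℝ} (hf : IsSym f)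
    {Y : Type*} {j₁ j₂ : Fin k → Y} (h₁ : Function.Injective j₁) (h₂ : Function.Injective j₂)
    (h : Set.range j₁ = Set.range j₂) (w : Y → ℕ) : f (w ∘ j₁) = f (w ∘ j₂) := by
  let σ : Perm (Fin k) :=
    (ofInjective j₁ h₁).trans ((setCongr h).trans (ofInjective j₂ h₂).symm)
  have hσ : ∀ i, j₂ (σ i) = j₁ i := fun i => apply_ofInjective_symm h₂ _
  rw [← hf σ (w ∘ j₂)]
  exact congrArg f (funext fun i => congrArg w (hσ i).symm)

theorem IsSym.apply_comp_equiv_comp_eq {k : ℕ} {f : (Fin k → ℕ) → ℝ} (hf : IsSym f)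
    {X Y : Type*} (e : X ≃ Y) {j₁ : Fin k → X} {j₂ : Fin k → Y} (h₁ : Function.Injective j₁)
    (h₂ : Function.Injective j₂) (h : ∀ y, e.symm y ∈ Set.range j₁ ↔ y ∈ Set.range j₂)
    (w : Y → ℕ) : f (w ∘ e ∘ j₁) = f (w ∘ j₂) :=
  hf.apply_comp_eq_of_range_eq (e.injective.comp h₁) h₂
    (Set.ext fun y => (mem_range_equiv_comp e j₁ y).trans (h y)) w

theorem contr_zero_apply {a b c : ℕ} (hc : a + b = 2 * 0 + c)
    (f : (Fin a → ℕ) → ℝ) (g : (Fin b → ℕ) → ℝ) (t : Fin c → ℕ) :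
    contr (Nat.zero_le a) (Nat.zero_le b) hc f g t
      = f (fun i => t ⟨i, by omega⟩) * g (fun j => t ⟨a + j, by omega⟩) := by
  simp [contr]

theorem summable_contr_zero_mul_self {a b c : ℕ} (hc : a + b = 2 * 0 + c)
    {f : (Fin a → ℕ) → ℝ} {g : (Fin b → ℕ) → ℝ}
    (hf : Summable fun j => f j * f j) (hg : Summable fun j => g j * g j) :
    Summable fun t => contr (Nat.zero_le a) (Nat.zero_le b) hc f g t *
      contr (Nat.zero_le a) (Nat.zero_le b) hc f g t := by
  obtain rfl : c = a + b := by omega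
  have := (Fin.appendEquiv a b).symm.summable_iff.mpr
    (hf.mul_of_nonneg hg (fun _ => mul_self_nonneg _) (fun _ => mul_self_nonneg _))
  refine this.congr fun t => ?_
  rw [contr_zero_apply]
  exact mul_mul_mul_comm _ _ _ _

theorem ip_symmize_symmize {N : ℕ} {F G : (Fin N → ℕ) → ℝ}
    (hF : Summable fun t => F t * F t) (hG : Summable fun t => G t * G t) :
    ip (symmize F) (symmize G)
      = 1 / (N ! : ℝ) * ∑ π : Perm (Fin N), ∑' t, F t * G (t ∘ π) := by
  have hsum : ∀ σ τ : Perm (Fin N), Summable fun t => F (t ∘ σ) * G (t ∘ τ) := fun σ τ =>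
    summable_mul_of_summable_mul_self (summable_comp_perm hF σ) (summable_comp_perm hG τ)
  have hshift : ∀ σ τ : Perm (Fin N),
      ∑' t, F (t ∘ σ) * G (t ∘ τ) = ∑' t, F t * G (t ∘ ⇑(σ⁻¹ * τ)) := fun σ τ => by
    rw [← tsum_comp_perm (fun t => F t * G (t ∘ ⇑(σ⁻¹ * τ))) σ]
    refine tsum_congr fun t => ?_
    congr 2
    ext i
    simp
  have hN : (N ! : ℝ) ≠ 0 := by positivity
  calc ip (symmize F) (symmize G)
      = (1 / (N ! : ℝ)) ^ 2 * ∑ σ : Perm (Fin N), ∑ τ : Perm (Fin N),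
          ∑' t, F (t ∘ σ) * G (t ∘ τ) := by
        have hpoint : ∀ t, symmize F t * symmize G t = (1 / (N ! : ℝ)) ^ 2 *
            ∑ σ : Perm (Fin N), ∑ τ : Perm (Fin N), F (t ∘ σ) * G (t ∘ τ) := fun t => by
          rw [symmize, symmize, mul_mul_mul_comm, Finset.sum_mul_sum, sq]
        rw [ip, tsum_congr hpoint, tsum_mul_left, Summable.tsum_finsetSum fun σ _ =>
          summable_sum fun τ _ => hsum σ τ]
        simp only [Summable.tsum_finsetSum fun τ _ => hsum _ τ]
    _ = (1 / (N ! : ℝ)) ^ 2 * ∑ _σ : Perm (Fin N), ∑ π : Perm (Fin N),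
          ∑' t, F t * G (t ∘ π) := by
        congr 1
        refine Finset.sum_congr rfl fun σ _ => ?_
        simp only [hshift σ]
        exact Equiv.sum_comp (Equiv.mulLeft σ⁻¹) fun π : Perm (Fin N) => ∑' t, F t * G (t ∘ π)
    _ = _ := by
        rw [Finset.sum_const, Finset.card_univ, Fintype.card_perm, Fintype.card_fin,
          nsmul_eq_mul]
        field_simp

section contrSlot
variable {c r : ℕ} {Z : Type*}

/-- The arguments of one factor in `contr`: the first `r` are summed indices, taken from `b`, the
others are free indices, read from the first summand from position `o` on. -/
def contrSlot (b : Fin r → Z) (o : ℕ) {k : ℕ} (h : o + k ≤ c + r) : Fin k → Fin c ⊕ Z :=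
  fun i => if hi : (i : ℕ) < r then Sum.inr (b ⟨i, hi⟩)
    else Sum.inl ⟨o + (i - r), by have := i.isLt; omega⟩
variable {b : Fin r → Z} {o k : ℕ} {h : o + k ≤ c + r}

theorem contrSlot_injective (hb : Function.Injective b) :
    Function.Injective (contrSlot b o h) := by
  intro i₁ i₂ hi
  simp only [contrSlot] at hi
  split_ifs at hi with h₁ h₂
  · exact Fin.ext (Fin.mk.inj_iff.mp (hb (Sum.inr_injective hi)))
  · have := congrArg Fin.val (Sum.inl_injective hi)
    simp only at this
    exact Fin.ext (by omega)

theorem inl_mem_range_contrSlot (j : Fin c) :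
    Sum.inl j ∈ Set.range (contrSlot b o h) ↔ o ≤ j ∧ (j : ℕ) < o + (k - r) := by
  constructor
  · rintro ⟨i, hi⟩
    simp only [contrSlot] at hi
    split_ifs at hi with hir
    have hj : o + ((i : ℕ) - r) = j := congrArg Fin.val (Sum.inl_injective hi)
    have := i.isLt
    omega
  · intro hj
    refine ⟨⟨r + (j - o), by omega⟩, ?_⟩
    simp only [contrSlot, dif_neg (show ¬ r + ((j : ℕ) - o) < r by omega)]
    exact congrArg Sum.inl (Fin.ext (by simp; omega))

theorem inr_mem_range_contrSlot (hrk : r ≤ k) (z : Z) :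
    Sum.inr z ∈ Set.range (contrSlot b o h) ↔ z ∈ Set.range b := by
  constructor
  · rintro ⟨i, hi⟩
    simp only [contrSlot] at hi
    split_ifs at hi with hir
    exact ⟨_, Sum.inr_injective hi⟩
  · rintro ⟨i, rfl⟩
    refine ⟨⟨i, by omega⟩, ?_⟩
    simp [contrSlot]

theorem sumElim_comp_contrSlot (s : Fin c → ℕ) (g : Z → ℕ) :
    Sum.elim s g ∘ contrSlot b o h = fun i : Fin k => if hi : (i : ℕ) < r then g (b ⟨i, hi⟩)
      else s ⟨o + (i - r), by have := i.isLt; omega⟩ := by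
  ext i
  simp only [Function.comp_apply, contrSlot]
  split_ifs <;> rfl

end contrSlot

section PairOfContractions
variable {n m r c : ℕ}

/-- `Fin c ⊕ (Fin r ⊕ Fin r)` indexes the free indices `s` and the summed indices `u`, `v` of
`⟨f₁ ⊗_r f₃, f₄ ⊗_r f₂⟩ = ∑ s, (∑ u, f₁ (u, s') f₃ (u, s'')) (∑ v, f₄ (v, s') f₂ (v, s''))`, where
`s'`, `s''` are the first `n - r` and the last `m - r` free indices. `leftFactorIdx` marks the
indices read by `f₁` (its complement: by `f₂`), `rightFactorIdx` those read by `f₃` (its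
complement: by `f₄`). -/
def leftFactorIdx (n r c : ℕ) : Fin c ⊕ (Fin r ⊕ Fin r) → Bool :=
  Sum.elim (fun j => decide ((j : ℕ) < n - r)) Sum.isLeft

def rightFactorIdx (n r c : ℕ) : Fin c ⊕ (Fin r ⊕ Fin r) → Bool :=
  Sum.elim (fun j => !decide ((j : ℕ) < n - r)) Sum.isLeft

theorem card_leftFactorIdx_and_rightFactorIdx :
    #{y | leftFactorIdx n r c y ∧ rightFactorIdx n r c y} = r := by
  rw [card_filter_sum, card_filter_sum]
  simp only [leftFactorIdx, rightFactorIdx, Sum.elim_inl, Sum.elim_inr, Sum.isLeft_inl,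
    Sum.isLeft_inr, Bool.not_eq_true', decide_eq_false_iff_not, decide_eq_true_eq, and_not_self,
    Bool.false_eq_true, and_self, filter_true, filter_false, card_univ, card_empty,
    Fintype.card_fin, Nat.zero_add, Nat.add_zero]

theorem card_leftFactorIdx (hrn : r ≤ n) (hrm : r ≤ m) (hc : n + m = 2 * r + c) :
    #{y | leftFactorIdx n r c y} = n := by
  rw [card_filter_sum, card_filter_sum]
  simp [leftFactorIdx, Fin.card_filter_val_lt]
  omega

theorem card_rightFactorIdx (hrn : r ≤ n) (hrm : r ≤ m) (hc : n + m = 2 * r + c) :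
    #{y | rightFactorIdx n r c y} = m := by
  have hsplit : #{j : Fin c | (j : ℕ) < n - r} + #{j : Fin c | ¬(j : ℕ) < n - r} = c := by
    rw [card_filter_add_card_filter_not, card_univ, Fintype.card_fin]
  rw [Fin.card_filter_val_lt] at hsplit
  rw [card_filter_sum, card_filter_sum]
  simp only [rightFactorIdx, Sum.elim_inl, Sum.elim_inr, Sum.isLeft_inl, Sum.isLeft_inr,
    Bool.not_eq_true', decide_eq_false_iff_not, Bool.false_eq_true, filter_true, filter_false,
    card_univ, card_empty, Fintype.card_fin]
  omega

theorem mem_range_contrSlot_inl_zero (hrn : r ≤ n) (hrm : r ≤ m) (hc : n + m = 2 * r + c)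
    (y : Fin c ⊕ (Fin r ⊕ Fin r)) :
    y ∈ Set.range (contrSlot Sum.inl 0 (k := n) (by omega)) ↔ leftFactorIdx n r c y := by
  rcases y with j | z
  · rw [inl_mem_range_contrSlot]
    simp [leftFactorIdx]
  · rw [inr_mem_range_contrSlot hrn]
    cases z <;> simp [leftFactorIdx]

theorem mem_range_contrSlot_inl (hrn : r ≤ n) (hrm : r ≤ m) (hc : n + m = 2 * r + c)
    (y : Fin c ⊕ (Fin r ⊕ Fin r)) :
    y ∈ Set.range (contrSlot Sum.inl (n - r) (k := m) (by omega)) ↔ rightFactorIdx n r c y := by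
  rcases y with j | z
  · rw [inl_mem_range_contrSlot]
    simp [rightFactorIdx]
    omega
  · rw [inr_mem_range_contrSlot hrm]
    cases z <;> simp [rightFactorIdx]

theorem mem_range_contrSlot_inr_zero (hrn : r ≤ n) (hrm : r ≤ m) (hc : n + m = 2 * r + c)
    (y : Fin c ⊕ (Fin r ⊕ Fin r)) :
    y ∈ Set.range (contrSlot Sum.inr 0 (k := n) (by omega)) ↔ ¬rightFactorIdx n r c y := by
  rcases y with j | z
  · rw [inl_mem_range_contrSlot]
    simp [rightFactorIdx]
    omega
  · rw [inr_mem_range_contrSlot hrn]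
    cases z <;> simp [rightFactorIdx]

theorem mem_range_contrSlot_inr (hrn : r ≤ n) (hrm : r ≤ m) (hc : n + m = 2 * r + c)
    (y : Fin c ⊕ (Fin r ⊕ Fin r)) :
    y ∈ Set.range (contrSlot Sum.inr (n - r) (k := m) (by omega)) ↔ ¬leftFactorIdx n r c y := by
  rcases y with j | z
  · rw [inl_mem_range_contrSlot]
    simp [leftFactorIdx]
    omega
  · rw [inr_mem_range_contrSlot hrm]
    cases z <;> simp [leftFactorIdx]

end PairOfContractions

/-- The number of coordinates of `t` read both by `f₁` in `(f₁ ⊗ f₂) t` and by `f₃` in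
`(f₃ ⊗ f₄) (t ∘ π)`. -/
def overlap (n m : ℕ) (π : Perm (Fin (n + m))) : ℕ :=
  #{x : Fin (n + m) | (x : ℕ) < n ∧ (π.symm x : ℕ) < m}

theorem card_filter_perm_symm_lt {n m : ℕ} (π : Perm (Fin (n + m))) :
    #{x : Fin (n + m) | (π.symm x : ℕ) < m} = m := by
  have : ({x | (π.symm x : ℕ) < m} : Finset (Fin (n + m)))
      = ({y | (y : ℕ) < m} : Finset (Fin (n + m))).map π.toEmbedding := by
    ext x
    simp [mem_map_equiv]
  rw [this, card_map, Fin.card_filter_val_lt]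
  omega

theorem overlap_le_left {n m : ℕ} (π : Perm (Fin (n + m))) : overlap n m π ≤ n := by
  calc overlap n m π ≤ #{x : Fin (n + m) | (x : ℕ) < n} :=
        card_le_card (monotone_filter_right _ fun _ _ h => h.1)
    _ = n := by rw [Fin.card_filter_val_lt]; omega

theorem overlap_le_right {n m : ℕ} (π : Perm (Fin (n + m))) : overlap n m π ≤ m := by
  calc overlap n m π ≤ #{x : Fin (n + m) | (π.symm x : ℕ) < m} :=
        card_le_card (monotone_filter_right _ fun _ _ h => h.2)
    _ = m := card_filter_perm_symm_lt π

theorem card_perm_filter_symm_lt_eq {n m : ℕ} {S : Finset (Fin (n + m))} (hS : #S = m) :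
    #{π : Perm (Fin (n + m)) | ({x | (π.symm x : ℕ) < m} : Finset (Fin (n + m))) = S}
      = m ! * n ! := by
  have hA : #({y | (y : ℕ) < m} : Finset (Fin (n + m))) = m := by
    rw [Fin.card_filter_val_lt]
    omega
  convert card_perm_forall_mem_iff (hA.trans hS.symm) using 2
  · ext π
    simp only [Finset.ext_iff, mem_filter, mem_univ, true_and]
    rw [← π.forall_congr_right]
    exact forall_congr' fun y => by rw [symm_apply_apply]; exact iff_comm
  · rw [hA]
  · rw [card_compl, hA, Fintype.card_fin, Nat.add_sub_cancel]

theorem card_overlap_eq {n m r : ℕ} (hr : r ≤ m) :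
    #{π : Perm (Fin (n + m)) | overlap n m π = r} = m ! * n ! * (n.choose r * m.choose r) := by
  let W : Perm (Fin (n + m)) → Finset (Fin (n + m)) := fun π => {x | (π.symm x : ℕ) < m}
  let T : Finset (Finset (Fin (n + m))) :=
    {S ∈ powersetCard m univ | #{x ∈ S | ((x : Fin (n + m)) : ℕ) < n} = r}
  have hW : ∀ π, #{x ∈ W π | ((x : Fin (n + m)) : ℕ) < n} = overlap n m π := fun π => by
    rw [overlap, filter_filter]
    simp only [and_comm]
  have hmaps : Set.MapsTo W ({π | overlap n m π = r} : Finset _) T := fun π hπ => by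
    simp only [coe_filter, mem_univ, true_and, Set.mem_ofPred_eq, mem_powersetCard,
      subset_univ, T] at hπ ⊢
    exact ⟨card_filter_perm_symm_lt π, (hW π).trans hπ⟩
  have hfiber : ∀ S ∈ T, #{π ∈ ({π | overlap n m π = r} : Finset _) | W π = S} = m ! * n ! := by
    intro S hS
    simp only [T, mem_filter, mem_powersetCard, subset_univ, true_and] at hS
    rw [filter_filter, ← card_perm_filter_symm_lt_eq hS.1]
    exact congrArg card (filter_congr fun π _ =>
      ⟨And.right, fun h => ⟨(hW π).symm.trans (by rw [show W π = S from h]; exact hS.2), h⟩⟩)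
  have hnot : #{x : Fin (n + m) | ¬(x : ℕ) < n} = m := by
    have := card_filter_add_card_filter_not (s := (univ : Finset (Fin (n + m))))
      fun x : Fin (n + m) => (x : ℕ) < n
    rw [Fin.card_filter_val_lt, card_univ, Fintype.card_fin] at this
    omega
  rw [card_eq_sum_card_fiberwise hmaps, sum_congr rfl hfiber, sum_const, smul_eq_mul,
    card_powersetCard_filter_card_filter _ hr, Fin.card_filter_val_lt, hnot,
    Nat.choose_symm hr, min_eq_right (Nat.le_add_right n m)]
  ring

theorem exists_equiv_leftFactorIdx_rightFactorIdx {n m r c : ℕ} {π : Perm (Fin (n + m))}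
    (hr : overlap n m π = r) (hrn : r ≤ n) (hrm : r ≤ m) (hc : n + m = 2 * r + c) :
    ∃ e : Fin (n + m) ≃ Fin c ⊕ (Fin r ⊕ Fin r), ∀ x, (leftFactorIdx n r c (e x) ↔ (x : ℕ) < n) ∧
      (rightFactorIdx n r c (e x) ↔ (π.symm x : ℕ) < m) :=
  exists_equiv_forall_iff_and_iff (p := fun x : Fin (n + m) => (x : ℕ) < n)
    (q := fun x => (π.symm x : ℕ) < m)
    (p' := fun y => leftFactorIdx n r c y) (q' := fun y => rightFactorIdx n r c y) (by simp; omega)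
    (by rw [Fin.card_filter_val_lt, card_leftFactorIdx hrn hrm hc]; omega)
    (by rw [card_filter_perm_symm_lt, card_rightFactorIdx hrn hrm hc])
    (by rw [← overlap, hr, card_leftFactorIdx_and_rightFactorIdx])

theorem contr_zero_mul_contr_zero_comp_perm {n m r c : ℕ} {f₁ f₄ : (Fin n → ℕ) → ℝ}
    {f₂ f₃ : (Fin m → ℕ) → ℝ} (h1 : IsSym f₁) (h4 : IsSym f₄) (h2 : IsSym f₂) (h3 : IsSym f₃)
    (hrn : r ≤ n) (hrm : r ≤ m) (hc : n + m = 2 * r + c) {π : Perm (Fin (n + m))}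
    {e : Fin (n + m) ≃ Fin c ⊕ (Fin r ⊕ Fin r)}
    (he : ∀ x, (leftFactorIdx n r c (e x) ↔ (x : ℕ) < n) ∧
      (rightFactorIdx n r c (e x) ↔ (π.symm x : ℕ) < m))
    (w : Fin c ⊕ (Fin r ⊕ Fin r) → ℕ) :
    contr (r := 0) (c := n + m) (by omega) (by omega) (by omega) f₁ f₂ (w ∘ e) *
        contr (r := 0) (c := n + m) (by omega) (by omega) (by omega) f₃ f₄ ((w ∘ e) ∘ π)
      = (f₁ (w ∘ contrSlot Sum.inl 0 (k := n) (by omega)) *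
          f₃ (w ∘ contrSlot Sum.inl (n - r) (k := m) (by omega))) *
        (f₄ (w ∘ contrSlot Sum.inr 0 (k := n) (by omega)) *
          f₂ (w ∘ contrSlot Sum.inr (n - r) (k := m) (by omega))) := by
  rw [contr_zero_apply, contr_zero_apply]
  show f₁ (w ∘ e ∘ Fin.castLE (by omega)) *
      f₂ (w ∘ e ∘ fun j : Fin m => (⟨n + j, by omega⟩ : Fin (n + m))) *
      (f₃ (w ∘ e ∘ π ∘ Fin.castLE (by omega)) *
        f₄ (w ∘ e ∘ π ∘ fun i : Fin n => (⟨m + i, by omega⟩ : Fin (n + m)))) = _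
  rw [h1.apply_comp_equiv_comp_eq e (Fin.castLE_injective _)
      (contrSlot_injective Sum.inl_injective) (fun y => by
        rw [Fin.range_castLE, Set.mem_ofPred_eq, ← (he _).1, apply_symm_apply,
          mem_range_contrSlot_inl_zero hrn hrm hc]),
    h2.apply_comp_equiv_comp_eq e (fin_mk_add_injective rfl)
      (contrSlot_injective Sum.inr_injective) (fun y => by
        rw [mem_range_fin_mk_add_iff rfl, ← (he _).1, apply_symm_apply,
          mem_range_contrSlot_inr hrn hrm hc]),
    h3.apply_comp_equiv_comp_eq e (π.injective.comp (Fin.castLE_injective _))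
      (contrSlot_injective Sum.inl_injective) (fun y => by
        rw [mem_range_equiv_comp, Fin.range_castLE, Set.mem_ofPred_eq, ← (he _).2,
          apply_symm_apply, mem_range_contrSlot_inl hrn hrm hc]),
    h4.apply_comp_equiv_comp_eq e (π.injective.comp (fin_mk_add_injective (by omega)))
      (contrSlot_injective Sum.inr_injective) (fun y => by
        rw [mem_range_equiv_comp, mem_range_fin_mk_add_iff (by omega), ← (he _).2,
          apply_symm_apply, mem_range_contrSlot_inr_zero hrn hrm hc])]
  ring

theorem tsum_contr_zero_mul_comp_perm_eq_ip_contr {n m r c : ℕ} {f₁ f₄ : (Fin n → ℕ) → ℝ}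
    {f₂ f₃ : (Fin m → ℕ) → ℝ} (h1 : IsSym f₁) (h4 : IsSym f₄) (h2 : IsSym f₂) (h3 : IsSym f₃)
    {π : Perm (Fin (n + m))} (hr : overlap n m π = r) (hrn : r ≤ n) (hrm : r ≤ m)
    (hc : n + m = 2 * r + c)
    (hsum : Summable fun t =>
      contr (r := 0) (c := n + m) (by omega) (by omega) (by omega) f₁ f₂ t *
        contr (r := 0) (c := n + m) (by omega) (by omega) (by omega) f₃ f₄ (t ∘ π)) :
    ∑' t, contr (r := 0) (c := n + m) (by omega) (by omega) (by omega) f₁ f₂ t *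
        contr (r := 0) (c := n + m) (by omega) (by omega) (by omega) f₃ f₄ (t ∘ π)
      = ip (contr hrn hrm hc f₁ f₃) (contr hrn hrm hc f₄ f₂) := by
  obtain ⟨e, he⟩ := exists_equiv_leftFactorIdx_rightFactorIdx hr hrn hrm hc
  let E : (Fin c → ℕ) × (Fin r → ℕ) × (Fin r → ℕ) ≃ (Fin (n + m) → ℕ) :=
    ((Equiv.refl _).prodCongr (sumArrowEquivProdArrow _ _ ℕ).symm).trans
      ((sumArrowEquivProdArrow _ _ ℕ).symm.trans (e.arrowCongr (Equiv.refl ℕ)).symm)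
  have hpoint := fun p : (Fin c → ℕ) × (Fin r → ℕ) × (Fin r → ℕ) =>
    contr_zero_mul_contr_zero_comp_perm h1 h4 h2 h3 hrn hrm hc he
      (Sum.elim p.1 (Sum.elim p.2.1 p.2.2))
  have hsum' := (E.summable_iff.mpr hsum).congr hpoint
  refine ((E.tsum_eq _).symm.trans (tsum_congr hpoint)).trans ?_
  simp only [sumElim_comp_contrSlot, Sum.elim_inl, Sum.elim_inr, Nat.zero_add] at hsum' ⊢
  symm
  exact tsum_tsum_mul_tsum_eq_tsum_prod _ _ hsum'

/-- **Lemma on symmetrized tensor products (Lemma `l1`, Nourdin–Rosinski):**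
for symmetric `f₁, f₄ ∈ H^{⊗n}` and `f₂, f₃ ∈ H^{⊗m}`,
`⟨f₁ ⊗̃ f₂, f₃ ⊗̃ f₄⟩ = (m! n!/(m+n)!) ∑_{r=0}^{m∧n} C(n,r) C(m,r) ⟨f₁ ⊗_r f₃, f₄ ⊗_r f₂⟩`. -/
theorem inner_symmetrized_tensor_products (n m : ℕ)
    (f₁ f₄ : (Fin n → ℕ) → ℝ) (f₂ f₃ : (Fin m → ℕ) → ℝ)
    (h1 : IsSym f₁) (h4 : IsSym f₄) (h2 : IsSym f₂) (h3 : IsSym f₃)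
    (hs1 : Summable fun j => f₁ j * f₁ j) (hs4 : Summable fun j => f₄ j * f₄ j)
    (hs2 : Summable fun j => f₂ j * f₂ j) (hs3 : Summable fun j => f₃ j * f₃ j) :
    ip (symmize (contr (r := 0) (c := n + m) (by omega) (by omega) (by omega) f₁ f₂))
       (symmize (contr (r := 0) (c := n + m) (by omega) (by omega) (by omega) f₃ f₄))
      = ((Nat.factorial m : ℝ) * (Nat.factorial n : ℝ) / (Nat.factorial (m + n) : ℝ)) *
          ∑ r ∈ (Finset.range (min m n + 1)).attach,
            (n.choose r : ℝ) * (m.choose r : ℝ) *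
              ip (contr (r := (r : ℕ)) (c := n + m - 2 * (r : ℕ))
                    (by have := Finset.mem_range.mp r.2; omega)
                    (by have := Finset.mem_range.mp r.2; omega)
                    (by have := Finset.mem_range.mp r.2; omega) f₁ f₃)
                 (contr (r := (r : ℕ)) (c := n + m - 2 * (r : ℕ))
                    (by have := Finset.mem_range.mp r.2; omega)
                    (by have := Finset.mem_range.mp r.2; omega)
                    (by have := Finset.mem_range.mp r.2; omega) f₄ f₂) := by
  have hF := summable_contr_zero_mul_self (by omega : n + m = 2 * 0 + (n + m)) hs1 hs2
  have hG := summable_contr_zero_mul_self (by omega : m + n = 2 * 0 + (n + m)) hs3 hs4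
  rw [ip_symmize_symmize hF hG, ← sum_fiberwise_of_maps_to (t := (range (min m n + 1)).attach)
    (g := fun π => ⟨overlap n m π, mem_range.mpr (Nat.lt_succ_of_le
      (le_min (overlap_le_right π) (overlap_le_left π)))⟩) fun _ _ => mem_attach _ _,
    mul_sum, mul_sum]
  refine sum_congr rfl fun r _ => ?_
  have hr := mem_range.mp r.2
  rw [sum_congr rfl fun π hπ =>
      tsum_contr_zero_mul_comp_perm_eq_ip_contr (c := n + m - 2 * r) h1 h4 h2 h3
        (congrArg Subtype.val (mem_filter.mp hπ).2) (by omega) (by omega) (by omega)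
        (summable_mul_of_summable_mul_self hF (summable_comp_perm hG π)), sum_const]
  simp only [Subtype.ext_iff]
  rw [card_overlap_eq (by omega), nsmul_eq_mul, Nat.add_comm m n]
  push_cast
  ring
end

section
/- Let f, g ∈ H^{⊗m} be symmetric (m = n) and let T_{m−1} be the k = m−1 term in the chaos expansion of E[det Λ] for (I_m(f), I_m(g)), i.e. T_{m−1} = (1/2) ((m−1)!)² ∑_{i,l≥1} (⟨s_{i,f}, s_{l,g}⟩ − ⟨s_{l,f}, s_{i,g}⟩)². Then T_{m−1} = m² (m!)² [ ‖f ⊗_{m−1} g‖² − ⟨f ⊗_1 g, g ⊗_1 f⟩ ]. -/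
/-! Write `A i l` for the pairing of the slices of `f` and `g` with first index `i` and `l`, so
that `⟨s_{i,f}, s_{l,g}⟩ = m² A i l`. Expanding the square turns the left side into
`m⁴ ((m-1)!)² (∑ A² - ∑ A i l * A l i)`. By symmetry of `f` and `g` the kernel of
`f ⊗_{m-1} g` is `(i, l) ↦ A i l`, and by Fubini `⟨f ⊗₁ g, g ⊗₁ f⟩ = ∑ A i l * A l i`;
Cauchy–Schwarz makes every sum involved absolutely convergent. -/

section SquareSummable

variable {α ι J : Type*}

lemma summable_norm_mul_of_summable_sq {F G : α → ℝ} (hF : Summable fun a => F a ^ 2)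
    (hG : Summable fun a => G a ^ 2) : Summable fun a => ‖F a * G a‖ :=
  ((hF.add hG).div_const 2).of_nonneg_of_le (fun _ => norm_nonneg _) fun a => by
    rw [Real.norm_eq_abs, abs_mul]
    nlinarith [sq_nonneg (|F a| - |G a|), sq_abs (F a), sq_abs (G a)]

lemma sq_tsum_mul_le {F G : α → ℝ} (hF : Summable fun a => F a ^ 2)
    (hG : Summable fun a => G a ^ 2) :
    (∑' a, F a * G a) ^ 2 ≤ (∑' a, F a ^ 2) * ∑' a, G a ^ 2 := by
  have hFG := (summable_norm_mul_of_summable_sq hF hG).of_norm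
  refine le_of_tendsto (hFG.hasSum.pow 2) (Filter.Eventually.of_forall fun s => ?_)
  calc (∑ a ∈ s, F a * G a) ^ 2 ≤ (∑ a ∈ s, F a ^ 2) * ∑ a ∈ s, G a ^ 2 :=
        Finset.sum_mul_sq_le_sq_mul_sq s F G
    _ ≤ (∑' a, F a ^ 2) * ∑' a, G a ^ 2 :=
        mul_le_mul (hF.sum_le_tsum s fun _ _ => sq_nonneg _)
          (hG.sum_le_tsum s fun _ _ => sq_nonneg _) (Finset.sum_nonneg fun _ _ => sq_nonneg _)
          (tsum_nonneg fun _ => sq_nonneg _)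

variable {F G : ι → J → ℝ}

lemma summable_sq_ip (hF : Summable fun p : ι × J => F p.1 p.2 ^ 2)
    (hG : Summable fun p : ι × J => G p.1 p.2 ^ 2) :
    Summable fun p : ι × ι => ip (F p.1) (G p.2) ^ 2 := by
  have hrows := (hF.prod.mul_of_nonneg hG.prod (fun _ => tsum_nonneg fun _ => sq_nonneg _)
    fun _ => tsum_nonneg fun _ => sq_nonneg _)
  exact hrows.of_nonneg_of_le (fun _ => sq_nonneg _) fun p =>
    sq_tsum_mul_le (hF.prod_factor p.1) (hG.prod_factor p.2)

lemma tsum_sub_swap_sq {A : ι → ι → ℝ} (hA : Summable fun p : ι × ι => A p.1 p.2 ^ 2) :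
    ∑' p : ι × ι, (A p.1 p.2 - A p.2 p.1) ^ 2
      = 2 * (∑' p : ι × ι, A p.1 p.2 ^ 2 - ∑' p : ι × ι, A p.1 p.2 * A p.2 p.1) := by
  have hA' : Summable fun p : ι × ι => A p.2 p.1 ^ 2 := (Equiv.prodComm ι ι).summable_iff.mpr hA
  have hAA : Summable fun p : ι × ι => A p.1 p.2 * A p.2 p.1 :=
    (summable_norm_mul_of_summable_sq hA hA').of_norm
  have hswap : ∑' p : ι × ι, A p.2 p.1 ^ 2 = ∑' p : ι × ι, A p.1 p.2 ^ 2 :=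
    (Equiv.prodComm ι ι).tsum_eq fun p => A p.1 p.2 ^ 2
  calc ∑' p : ι × ι, (A p.1 p.2 - A p.2 p.1) ^ 2
      = ∑' p : ι × ι, ((A p.1 p.2 ^ 2 + A p.2 p.1 ^ 2) - 2 * (A p.1 p.2 * A p.2 p.1)) :=
        tsum_congr fun _ => by ring
    _ = _ := by
        rw [(hA.add hA').tsum_sub (hAA.mul_left 2), hA.tsum_add hA', tsum_mul_left, hswap]
        ring

lemma summable_sq_mul_sq (hF : Summable fun p : ι × J => F p.1 p.2 ^ 2)
    (hG : Summable fun p : ι × J => G p.1 p.2 ^ 2) :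
    Summable fun x : (ι × J) × (ι × J) => (F x.1.1 x.1.2 * G x.2.1 x.2.2) ^ 2 := by
  simpa only [mul_pow] using
    hF.mul_of_nonneg hG (fun _ => sq_nonneg _) fun _ => sq_nonneg _

lemma tsum_mul_tsum_eq_tsum_ip_mul_ip (hF : Summable fun p : ι × J => F p.1 p.2 ^ 2)
    (hG : Summable fun p : ι × J => G p.1 p.2 ^ 2) :
    ∑' q : J × J, (∑' u, F u q.1 * G u q.2) * (∑' v, G v q.1 * F v q.2)
      = ∑' p : ι × ι, ip (F p.1) (G p.2) * ip (F p.2) (G p.1) := by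
  have hcol : ∀ {H : ι → J → ℝ}, Summable (fun p : ι × J => H p.1 p.2 ^ 2) →
      ∀ a, Summable fun u => H u a ^ 2 := fun hH a =>
    hH.comp_injective (i := fun u => (u, a)) fun _ _ h => congrArg Prod.fst h
  have hrow : ∀ {H : ι → J → ℝ}, Summable (fun p : ι × J => H p.1 p.2 ^ 2) →
      ∀ u, Summable fun a => H u a ^ 2 := fun hH u => hH.prod_factor u
  -- every index occurs in exactly one factor of each square, so both are product-summable
  have hK : Summable fun x : (J × J) × (ι × ι) =>
      (F x.2.1 x.1.1 * G x.2.1 x.1.2) * (G x.2.2 x.1.1 * F x.2.2 x.1.2) := by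
    have hFF := (summable_sq_mul_sq hF hF).comp_injective
      (i := fun x : (J × J) × (ι × ι) => ((x.2.1, x.1.1), (x.2.2, x.1.2)))
      (by rintro ⟨⟨_, _⟩, _, _⟩ ⟨⟨_, _⟩, _, _⟩ h; simp_all)
    have hGG := (summable_sq_mul_sq hG hG).comp_injective
      (i := fun x : (J × J) × (ι × ι) => ((x.2.1, x.1.2), (x.2.2, x.1.1)))
      (by rintro ⟨⟨_, _⟩, _, _⟩ ⟨⟨_, _⟩, _, _⟩ h; simp_all)
    refine (summable_norm_mul_of_summable_sq hFF hGG).of_norm.congr fun x => ?_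
    ring
  calc ∑' q : J × J, (∑' u, F u q.1 * G u q.2) * (∑' v, G v q.1 * F v q.2)
      = ∑' q : J × J, ∑' p : ι × ι,
          (F p.1 q.1 * G p.1 q.2) * (G p.2 q.1 * F p.2 q.2) :=
        tsum_congr fun q => tsum_mul_tsum_of_summable_norm
          (summable_norm_mul_of_summable_sq (hcol hF q.1) (hcol hG q.2))
          (summable_norm_mul_of_summable_sq (hcol hG q.1) (hcol hF q.2))
    _ = ∑' p : ι × ι, ∑' q : J × J,
          (F p.1 q.1 * G p.1 q.2) * (G p.2 q.1 * F p.2 q.2) := hK.tsum_comm.symm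
    _ = ∑' p : ι × ι, ip (F p.1) (G p.2) * ip (F p.2) (G p.1) := by
        refine tsum_congr fun p => ?_
        rw [ip, ip, tsum_mul_tsum_of_summable_norm
          (summable_norm_mul_of_summable_sq (hrow hF p.1) (hrow hG p.2))
          (summable_norm_mul_of_summable_sq (hrow hF p.2) (hrow hG p.1))]
        exact tsum_congr fun q => by ring

end SquareSummable

section Kernels
variable {m : ℕ}

def consTuple (a : ℕ) (j : Fin (m - 1) → ℕ) : Fin m → ℕ :=
  fun k => if hk : (k : ℕ) = 0 then a else j ⟨(k : ℕ) - 1, by have := k.isLt; omega⟩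

noncomputable def slice (f : (Fin m → ℕ) → ℝ) (a : ℕ) (j : Fin (m - 1) → ℕ) : ℝ :=
  f (consTuple a j)

lemma consTuple_injective (hm : 1 ≤ m) :
    Function.Injective fun p : ℕ × (Fin (m - 1) → ℕ) => consTuple p.1 p.2 := by
  rintro ⟨a, j⟩ ⟨b, k⟩ h
  have hfirst := congrFun h ⟨0, hm⟩
  have htail : ∀ i : Fin (m - 1), j i = k i := fun i => by
    simpa [consTuple] using congrFun h ⟨i + 1, by have := i.isLt; omega⟩
  simp only [consTuple, dif_pos] at hfirst
  exact Prod.ext hfirst (funext htail)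

lemma summable_sq_slice (hm : 1 ≤ m) {f : (Fin m → ℕ) → ℝ}
    (hf2 : Summable fun j => f j * f j) :
    Summable fun p : ℕ × (Fin (m - 1) → ℕ) => slice f p.1 p.2 ^ 2 :=
  (hf2.comp_injective (consTuple_injective hm)).congr fun _ => (sq _).symm

lemma ip_sder (f g : (Fin m → ℕ) → ℝ) (i l : ℕ) :
    ip (sder f i) (sder g l) = (m : ℝ) ^ 2 * ip (slice f i) (slice g l) := by
  rw [ip, ip, ← tsum_mul_left]
  refine tsum_congr fun j => ?_
  show (m * slice f i j) * (m * slice g l j) = m ^ 2 * (slice f i j * slice g l j)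
  ring

lemma IsSym.apply_snoc_eq_slice {f : (Fin m → ℕ) → ℝ} (hf : IsSym f) (hm : 1 ≤ m) (a : ℕ)
    (u : Fin (m - 1) → ℕ) :
    f (fun i => if hi : (i : ℕ) < m - 1 then u ⟨i, hi⟩ else a) = slice f a u := by
  obtain ⟨n, rfl⟩ : ∃ n, m = n + 1 := ⟨m - 1, by omega⟩
  refine Eq.trans (congrArg f (funext fun i => ?_)) (hf (finRotate (n + 1)) (consTuple a u))
  simp only [Function.comp_apply, consTuple, coe_finRotate, Fin.ext_iff, Fin.val_last]
  have := i.isLt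
  split_ifs <;> first | rfl | omega | contradiction

lemma contr_top_apply {h1 h2 : m - 1 ≤ m} {h3 : m + m = 2 * (m - 1) + 2}
    {f g : (Fin m → ℕ) → ℝ} (hf : IsSym f) (hg : IsSym g) (hm : 1 ≤ m) (t : Fin 2 → ℕ) :
    contr h1 h2 h3 f g t = ip (slice f (t 0)) (slice g (t 1)) := by
  refine tsum_congr fun u => ?_
  rw [← hf.apply_snoc_eq_slice hm, ← hg.apply_snoc_eq_slice hm]
  congr! 3 with i <;> split_ifs with hi
  all_goals first | rfl | exact congrArg t (Fin.ext (by simp; omega))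

lemma contr_one_apply {h1 h2 : 1 ≤ m} {h3 : m + m = 2 * 1 + (2 * m - 2)}
    (f g : (Fin m → ℕ) → ℝ) (t : Fin (2 * m - 2) → ℕ) :
    contr h1 h2 h3 f g t = ∑' u : ℕ, slice f u (fun k => t ⟨k, by omega⟩) *
      slice g u (fun k => t ⟨m - 1 + k, by omega⟩) := by
  rw [contr, ← (Equiv.funUnique (Fin 1) ℕ).symm.tsum_eq]
  refine tsum_congr fun u => ?_
  unfold slice
  congr! 3 with i <;> unfold consTuple <;> split_ifs <;> first | rfl | omega

lemma nsq_contr_top {h1 h2 : m - 1 ≤ m} {h3 : m + m = 2 * (m - 1) + 2}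
    {f g : (Fin m → ℕ) → ℝ} (hf : IsSym f) (hg : IsSym g) (hm : 1 ≤ m) :
    nsq (contr h1 h2 h3 f g) = ∑' p : ℕ × ℕ, ip (slice f p.1) (slice g p.2) ^ 2 := by
  rw [nsq, ip, ← (piFinTwoEquiv fun _ => ℕ).symm.tsum_eq]
  refine tsum_congr fun p => ?_
  rw [contr_top_apply hf hg hm, sq]
  rfl

lemma ip_contr_one {h1 h2 h1' h2' : 1 ≤ m} {h3 h3' : m + m = 2 * 1 + (2 * m - 2)}
    {f g : (Fin m → ℕ) → ℝ} (hf2 : Summable fun j => f j * f j)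
    (hg2 : Summable fun j => g j * g j) (hm : 1 ≤ m) :
    ip (contr h1 h2 h3 f g) (contr h1' h2' h3' g f)
      = ∑' p : ℕ × ℕ, ip (slice f p.1) (slice g p.2) * ip (slice f p.2) (slice g p.1) := by
  let e := (Fin.appendEquiv (m - 1) (m - 1)).trans
    (Equiv.arrowCongr (finCongr (by omega : m - 1 + (m - 1) = 2 * m - 2)) (Equiv.refl ℕ))
  rw [ip, ← e.tsum_eq, ← tsum_mul_tsum_eq_tsum_ip_mul_ip (summable_sq_slice hm hf2)
    (summable_sq_slice hm hg2)]
  refine tsum_congr fun q => ?_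
  rw [contr_one_apply, contr_one_apply]
  have hleft : (fun k : Fin (m - 1) => e q ⟨k, by omega⟩) = q.1 :=
    funext (Fin.append_left q.1 q.2)
  have hright : (fun k : Fin (m - 1) => e q ⟨m - 1 + k, by omega⟩) = q.2 :=
    funext (Fin.append_right q.1 q.2)
  rw [hleft, hright]

end Kernels

/-- **The last term of the chaos expansion (Proposition for `T_{m−1}`):**
for symmetric `f, g ∈ H^{⊗m}`,
`T_{m−1} = (1/2)((m−1)!)² ∑_{i,l} (⟨s_{i,f}, s_{l,g}⟩ − ⟨s_{l,f}, s_{i,g}⟩)²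
         = m² (m!)² (‖f ⊗_{m−1} g‖² − ⟨f ⊗₁ g, g ⊗₁ f⟩)`. -/
theorem T_last_formula (m : ℕ) (hm : 1 ≤ m)
    (f g : (Fin m → ℕ) → ℝ) (hf : IsSym f) (hg : IsSym g)
    (hf2 : Summable fun j => f j * f j) (hg2 : Summable fun j => g j * g j) :
    (1 / 2) * (Nat.factorial (m - 1) : ℝ) ^ 2 *
        ∑' il : ℕ × ℕ,
          (ip (sder f il.1) (sder g il.2) - ip (sder f il.2) (sder g il.1)) ^ 2
      = (m : ℝ) ^ 2 * (Nat.factorial m : ℝ) ^ 2 *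
          (nsq (contr (r := m - 1) (c := 2) (by omega) (by omega) (by omega) f g)
            - ip (contr (r := 1) (c := 2 * m - 2) (by omega) (by omega) (by omega) f g)
                 (contr (r := 1) (c := 2 * m - 2) (by omega) (by omega) (by omega) g f)) := by
  set A : ℕ → ℕ → ℝ := fun i l => ip (slice f i) (slice g l)
  have hA : Summable fun p : ℕ × ℕ => A p.1 p.2 ^ 2 :=
    summable_sq_ip (summable_sq_slice hm hf2) (summable_sq_slice hm hg2)
  have hsder : ∀ il : ℕ × ℕ,
      (ip (sder f il.1) (sder g il.2) - ip (sder f il.2) (sder g il.1)) ^ 2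
        = (m : ℝ) ^ 4 * (A il.1 il.2 - A il.2 il.1) ^ 2 := fun il => by
    rw [ip_sder, ip_sder]
    ring
  rw [tsum_congr hsder, tsum_mul_left, tsum_sub_swap_sq hA, nsq_contr_top hf hg hm,
    ip_contr_one hf2 hg2 hm, ← Nat.mul_factorial_pred (by omega : m ≠ 0)]
  push_cast
  ring
end

section
/- For symmetric kernels f ∈ L²(Tⁿ) and g ∈ L²(Tᵐ) with Hilbert basis coefficient derivatives s_{i,f}, s_{l,g}, one has ∑_{i,l≥1} ‖s_{i,f} ⊗_r s_{l,g}‖² = n² m² ‖f ⊗_r g‖² for every r = 0,…,(n−1)∧(m−1). -/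
/-! The derivative index `i` of `s_{i,f}` sits in front of the `r` contracted indices, while in
`f ⊗_r g` it must sit behind them; the symmetry of `f` moves it there (a cyclic permutation of
the first `r + 1` slots). Hence, splitting index tuples into contracted and free parts,
`(s_{i,f} ⊗_r s_{l,g})(t₁, t₂) = n m (f ⊗_r g)((i, t₁), (l, t₂))`, and summing the squares over
`i, l, t₁, t₂` gives `n² m² ‖f ⊗_r g‖²`. The interchange of sums is justified because `f ⊗_r g`
is square-summable by the Cauchy–Schwarz inequality. -/

section CauchySchwarz

variable {ι : Type*} {u v : ι → ℝ}

lemma summable_mul_of_summable_mul_self_s18 (hu : Summable fun a => u a * u a)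
    (hv : Summable fun a => v a * v a) : Summable fun a => u a * v a := by
  refine Summable.of_norm_bounded ((hu.add hv).div_const 2) fun a => ?_
  rw [Real.norm_eq_abs, abs_mul]
  nlinarith [sq_nonneg (|u a| - |v a|), sq_abs (u a), sq_abs (v a)]

lemma tsum_mul_mul_self_le (hu : Summable fun a => u a * u a)
    (hv : Summable fun a => v a * v a) :
    (∑' a, u a * v a) * (∑' a, u a * v a) ≤ (∑' a, u a * u a) * (∑' a, v a * v a) := by
  have hlim := (summable_mul_of_summable_mul_self_s18 hu hv).hasSum
  refine le_of_tendsto' (Filter.Tendsto.mul hlim hlim) fun s => ?_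
  have hcs := Finset.sum_mul_sq_le_sq_mul_sq s u v
  simp only [sq] at hcs
  refine hcs.trans (mul_le_mul ?_ ?_ (Finset.sum_nonneg fun a _ => mul_self_nonneg _)
    (tsum_nonneg fun a => mul_self_nonneg _))
  · exact hu.sum_le_tsum s fun a _ => mul_self_nonneg _
  · exact hv.sum_le_tsum s fun a _ => mul_self_nonneg _

variable {α β γ : Type*}

lemma summable_tsum_mul_mul_self {F : β × α → ℝ} {G : γ × α → ℝ}
    (hF : Summable fun p => F p * F p) (hG : Summable fun p => G p * G p) :
    Summable fun bc : β × γ =>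
      (∑' a, F (bc.1, a) * G (bc.2, a)) * (∑' a, F (bc.1, a) * G (bc.2, a)) :=
  Summable.of_nonneg_of_le (fun _ => mul_self_nonneg _)
    (fun bc => tsum_mul_mul_self_le (hF.prod_factor bc.1) (hG.prod_factor bc.2))
    (hF.prod.mul_of_nonneg hG.prod (fun _ => tsum_nonneg fun _ => mul_self_nonneg _)
      (fun _ => tsum_nonneg fun _ => mul_self_nonneg _))

end CauchySchwarz

section SquaredNorm

variable {α β : Type*}

lemma nsq_comp_equiv (e : α ≃ β) (F : β → ℝ) : nsq (F ∘ e) = nsq F :=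
  e.tsum_eq fun b => F b * F b

lemma nsq_const_mul (c : ℝ) (F : α → ℝ) : nsq (fun x => c * F x) = c ^ 2 * nsq F := by
  simp only [nsq, ip, ← tsum_mul_left]
  exact tsum_congr fun x => by ring

lemma tsum_nsq_curry {H : α × β → ℝ} (hH : Summable fun p => H p * H p) :
    ∑' a, nsq (fun b => H (a, b)) = nsq H :=
  hH.tsum_prod.symm

end SquaredNorm

section Tuples

variable {α : Type*}

def tupleAppendEquiv (p q c : ℕ) (h : p + q = c) :
    ((Fin p → α) × (Fin q → α)) ≃ (Fin c → α) where
  toFun x k := if hk : (k : ℕ) < p then x.1 ⟨k, hk⟩ else x.2 ⟨k - p, by omega⟩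
  invFun t := (fun j => t ⟨j, by omega⟩, fun j => t ⟨p + j, by omega⟩)
  left_inv := by
    rintro ⟨x, y⟩
    refine Prod.ext (funext fun j => ?_) (funext fun j => ?_) <;> simp
  right_inv := by
    intro t
    funext k
    by_cases hk : (k : ℕ) < p
    · simp [hk]
    · simp only [hk, dite_false]
      congr 1
      ext
      simp only
      omega

def tupleConsEquiv (p q : ℕ) (h : p + 1 = q) : (α × (Fin p → α)) ≃ (Fin q → α) where
  toFun x k := if hk : (k : ℕ) = 0 then x.1 else x.2 ⟨k - 1, by omega⟩
  invFun t := (t ⟨0, by omega⟩, fun j => t ⟨j + 1, by omega⟩)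
  left_inv := by
    rintro ⟨i, x⟩
    refine Prod.ext ?_ (funext fun j => ?_) <;> simp
  right_inv := by
    intro t
    funext k
    by_cases hk : (k : ℕ) = 0
    · simp only [hk, dite_true]
      congr 1
      ext
      exact hk.symm
    · simp only [hk, dite_false]
      congr 1
      ext
      simp only
      omega

lemma tupleConsEquiv_tupleAppendEquiv_comp_cycleRange {r s p q s' : ℕ} (hp : r + s = p)
    (hq : p + 1 = q) (hs : s + 1 = s') (i : α) (u : Fin r → α) (t : Fin s → α) :
    tupleConsEquiv p q hq (i, tupleAppendEquiv r s p hp (u, t)) ∘ Fin.cycleRange ⟨r, by omega⟩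
      = tupleAppendEquiv r s' q (by omega) (u, tupleConsEquiv s s' hs (i, t)) := by
  funext k
  simp only [Function.comp_apply, tupleConsEquiv, tupleAppendEquiv, Equiv.coe_fn_mk]
  rcases lt_trichotomy (k : ℕ) r with hk | hk | hk
  · have hσ : ((Fin.cycleRange ⟨r, by omega⟩ k : Fin q) : ℕ) = k + 1 := by
      rw [Fin.coe_cycleRange_of_le (Fin.le_def.mpr hk.le), if_neg (by simp [Fin.ext_iff]; omega)]
    simp [hσ, hk]
  · have hσ : ((Fin.cycleRange ⟨r, by omega⟩ k : Fin q) : ℕ) = 0 := by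
      rw [Fin.coe_cycleRange_of_le (Fin.le_def.mpr hk.le), if_pos (Fin.ext hk)]
    simp [hσ, hk]
  · rw [Fin.cycleRange_of_gt (Fin.lt_def.mpr hk)]
    rw [dif_neg (by omega), dif_neg (by omega), dif_neg (by omega), dif_neg (by omega)]
    congr 1
    ext
    simp only
    omega

end Tuples

section Contraction

variable {n m r c : ℕ}

lemma contr_tupleAppendEquiv (hrn : r ≤ n) (hrm : r ≤ m) (hc : n + m = 2 * r + c)
    (f : (Fin n → ℕ) → ℝ) (g : (Fin m → ℕ) → ℝ) (b : Fin (n - r) → ℕ) (d : Fin (m - r) → ℕ) :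
    contr hrn hrm hc f g (tupleAppendEquiv (n - r) (m - r) c (by omega) (b, d))
      = ∑' u : Fin r → ℕ, f (tupleAppendEquiv r (n - r) n (by omega) (u, b)) *
          g (tupleAppendEquiv r (m - r) m (by omega) (u, d)) := by
  refine tsum_congr fun u => ?_
  congr 2 <;> funext i <;> simp only [tupleAppendEquiv, Equiv.coe_fn_mk]
  · by_cases hi : (i : ℕ) < r
    · rw [dif_pos hi, dif_pos hi]
    · rw [dif_neg hi, dif_neg hi, dif_pos (by omega)]
  · by_cases hi : (i : ℕ) < r
    · rw [dif_pos hi, dif_pos hi]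
    · rw [dif_neg hi, dif_neg hi, dif_neg (by omega)]
      congr 1
      ext
      simp only
      omega

lemma summable_contr_mul_self (hrn : r ≤ n) (hrm : r ≤ m) (hc : n + m = 2 * r + c)
    {f : (Fin n → ℕ) → ℝ} {g : (Fin m → ℕ) → ℝ}
    (hf : Summable fun j => f j * f j) (hg : Summable fun j => g j * g j) :
    Summable fun t => contr hrn hrm hc f g t * contr hrn hrm hc f g t := by
  let eF := (Equiv.prodComm _ _).trans (tupleAppendEquiv (α := ℕ) r (n - r) n (by omega))
  let eG := (Equiv.prodComm _ _).trans (tupleAppendEquiv (α := ℕ) r (m - r) m (by omega))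
  have hF := eF.summable_iff.mpr hf
  have hG := eG.summable_iff.mpr hg
  refine (tupleAppendEquiv (n - r) (m - r) c (by omega)).summable_iff.mp ?_
  refine (summable_tsum_mul_mul_self hF hG).congr fun ⟨b, d⟩ => ?_
  rw [Function.comp_apply, contr_tupleAppendEquiv]
  rfl

lemma sder_tupleAppendEquiv (hn : 1 ≤ n) (hr : r ≤ n - 1) {f : (Fin n → ℕ) → ℝ} (hf : IsSym f)
    (i : ℕ) (u : Fin r → ℕ) (t : Fin (n - 1 - r) → ℕ) :
    sder f i (tupleAppendEquiv r (n - 1 - r) (n - 1) (by omega) (u, t))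
      = n * f (tupleAppendEquiv r (n - r) n (by omega)
          (u, tupleConsEquiv (n - 1 - r) (n - r) (by omega) (i, t))) := by
  rw [← tupleConsEquiv_tupleAppendEquiv_comp_cycleRange _ (show n - 1 + 1 = n by omega), hf]
  rfl

lemma contr_sder_sder {c' : ℕ} (hn : 1 ≤ n) (hm : 1 ≤ m) (hrn : r ≤ n - 1)
    (hrm : r ≤ m - 1) (hc : n - 1 + (m - 1) = 2 * r + c) (hc' : n + m = 2 * r + c')
    {f : (Fin n → ℕ) → ℝ} {g : (Fin m → ℕ) → ℝ} (hf : IsSym f) (hg : IsSym g) (i l : ℕ)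
    (t₁ : Fin (n - 1 - r) → ℕ) (t₂ : Fin (m - 1 - r) → ℕ) :
    contr hrn hrm hc (sder f i) (sder g l)
        (tupleAppendEquiv (n - 1 - r) (m - 1 - r) c (by omega) (t₁, t₂))
      = n * m * contr (by omega : r ≤ n) (by omega : r ≤ m) hc' f g
          (tupleAppendEquiv (n - r) (m - r) c' (by omega)
            (tupleConsEquiv (n - 1 - r) (n - r) (by omega) (i, t₁),
              tupleConsEquiv (m - 1 - r) (m - r) (by omega) (l, t₂))) := by
  rw [contr_tupleAppendEquiv, contr_tupleAppendEquiv, ← tsum_mul_left]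
  refine tsum_congr fun u => ?_
  rw [sder_tupleAppendEquiv hn hrn hf, sder_tupleAppendEquiv hm hrm hg]
  ring

end Contraction

/-- For symmetric `f ∈ H^{⊗n}`, `g ∈ H^{⊗m}` and `r = 0,…,(n−1)∧(m−1)`,
`∑_{i,l} ‖s_{i,f} ⊗_r s_{l,g}‖² = n² m² ‖f ⊗_r g‖²`. -/
theorem sum_sder_contraction_norms (n m r : ℕ) (hn : 1 ≤ n) (hm : 1 ≤ m)
    (hr : r ≤ min (n - 1) (m - 1))
    (f : (Fin n → ℕ) → ℝ) (g : (Fin m → ℕ) → ℝ) (hf : IsSym f) (hg : IsSym g)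
    (hf2 : Summable fun j => f j * f j) (hg2 : Summable fun j => g j * g j) :
    (∑' il : ℕ × ℕ,
        nsq (contr (r := r) (c := n + m - 2 - 2 * r) (by omega) (by omega) (by omega)
          (sder f il.1) (sder g il.2)))
      = (n : ℝ) ^ 2 * (m : ℝ) ^ 2 *
          nsq (contr (r := r) (c := n + m - 2 * r) (by omega) (by omega) (by omega) f g) := by
  have hrn : r ≤ n - 1 := hr.trans (min_le_left _ _)
  have hrm : r ≤ m - 1 := hr.trans (min_le_right _ _)
  let E : (ℕ × ℕ) × ((Fin (n - 1 - r) → ℕ) × (Fin (m - 1 - r) → ℕ)) ≃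
      (Fin (n + m - 2 * r) → ℕ) :=
    (Equiv.prodProdProdComm ..).trans <|
      (Equiv.prodCongr (tupleConsEquiv _ _ (by omega)) (tupleConsEquiv _ _ (by omega))).trans
        (tupleAppendEquiv (n - r) (m - r) _ (by omega))
  let K := contr (r := r) (c := n + m - 2 * r) (by omega) (by omega) (by omega) f g
  have hsum : Summable fun p => (n * m * K (E p)) * (n * m * K (E p)) :=
    ((E.summable_iff.mpr (summable_contr_mul_self _ _ _ hf2 hg2)).mul_left
      ((n : ℝ) * m * (n * m))).congr fun p => by simp only [Function.comp_apply]; ring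
  calc _ = ∑' il : ℕ × ℕ, nsq fun t => n * m * K (E (il, t)) := by
        refine tsum_congr fun il => ?_
        rw [← nsq_comp_equiv (tupleAppendEquiv (n - 1 - r) (m - 1 - r) _ (by omega))]
        congr 1
        funext ⟨t₁, t₂⟩
        exact contr_sder_sder hn hm hrn hrm _ _ hf hg _ _ _ _
    _ = nsq fun p => n * m * K (E p) := tsum_nsq_curry hsum
    _ = _ := by
        rw [nsq_const_mul, ← Function.comp_def, nsq_comp_equiv]
        ring
end
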